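/- (Case i>0, j<0.) Assume t_{−i,−a} = t_{ia} for all i ∈ I_{r|r} and a ∈ I_{n|n}, and assume relation (II) holds for all 1 ≤ i,j ≤ r and a,b ∈ I_{n|n}. Then relation (I) holds for all i,j ∈ I_{r|r} with j < 0 < i and all a,b ∈ I_{n|n}. -/

import Mathlib

open scoped BigOperators

set_option synthInstance.maxHeartbeats 400000
set_option maxHeartbeats 1000000

noncomputable section

/-- The base field `K = ℂ(q)`. -/
abbrev K : Type := RatFunc ℂ

/-- The indeterminate `q ∈ ℂ(q)`. -/
noncomputable def q : K := RatFunc.X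

/-- `ξ = q - q⁻¹`. -/
noncomputable def ξ : K := q - q⁻¹

/-- Parity: `p(i) = 0` if `i > 0`, and `p(i) = 1` if `i < 0`. -/
def p (i : ℤ) : ℕ := if 0 < i then 0 else 1

/-- `φ(i,j) = (-1)^{p(j)} (δ_{i,j} + δ_{i,-j})`. -/
def φ (i j : ℤ) : ℤ :=
  (if 0 < j then 1 else -1) * ((if i = j then 1 else 0) + (if i = -j then 1 else 0))

/-- Indicator of a (decidable) proposition, as an element of `K`. -/
def ind (P : Prop) [Decidable P] : K := if P then 1 else 0

/-- Membership in the index set `I_{m|m} = {-m, …, -1, 1, …, m} ⊆ ℤ`. -/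
def Idx (m : ℕ) (i : ℤ) : Prop := i ≠ 0 ∧ |i| ≤ (m : ℤ)

section Relations

variable {A : Type*} [Ring A] [Algebra K A]

/-- Relation (I), for indices `i, j ∈ I_{r|r}` and `a, b ∈ I_{n|n}`:
`(-1)^{p(i)p(j)+p(j)p(b)+p(b)p(i)} ( q^{φ(i,j)} t_{ia} t_{jb}
  − (-1)^{(p(i)+p(a))(p(j)+p(b))} q^{φ(a,b)} t_{jb} t_{ia} )
 = ξ (δ_{a<b} − δ_{j<i}) t_{ja} t_{ib}
   + (-1)^{p(j)+p(b)} ξ (δ_{−a<b} − δ_{j<−i}) t_{j,−a} t_{i,−b}`. -/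
def RelI (t : ℤ → ℤ → A) (i j a b : ℤ) : Prop :=
  ((-1 : K) ^ (p i * p j + p j * p b + p b * p i)) •
      ((q ^ φ i j) • (t i a * t j b)
        - (((-1 : K) ^ ((p i + p a) * (p j + p b))) * q ^ φ a b) • (t j b * t i a))
  = (ξ * (ind (a < b) - ind (j < i))) • (t j a * t i b)
    + (((-1 : K) ^ (p j + p b)) * ξ * (ind (-a < b) - ind (j < -i))) •
        (t j (-a) * t i (-b))

/-- Relation (II), for indices `1 ≤ i, j ≤ r` and `a, b ∈ I_{n|n}`:
`q^{δ_{ij}} t_{ia} t_{jb} − (-1)^{p(a)p(b)} q^{φ(a,b)} t_{jb} t_{ia}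
 = ξ (δ_{a<b} − δ_{j<i}) t_{ja} t_{ib} + (-1)^{p(b)} ξ δ_{−a<b} t_{j,−a} t_{i,−b}`. -/
def RelII (t : ℤ → ℤ → A) (i j a b : ℤ) : Prop :=
  (q ^ (if i = j then 1 else 0 : ℕ)) • (t i a * t j b)
      - (((-1 : K) ^ (p a * p b)) * q ^ φ a b) • (t j b * t i a)
  = (ξ * (ind (a < b) - ind (j < i))) • (t j a * t i b)
    + (((-1 : K) ^ p b) * ξ * ind (-a < b)) • (t j (-a) * t i (-b))

end Relations

/-!
Write `j = -j'`. By `t_{-i,-a} = t_{ia}` the monomials of (I) at `(i, -j', a, b)` are those of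
(II) at `(i, j', a, -b)`: `X = t_{ia} t_{j',-b}`, `Y = t_{j',-b} t_{ia}`, `Z = t_{j'a} t_{i,-b}`,
`W = t_{j',-a} t_{ib}`. Multiplied by `(-1)^{p(b)}`, (I) differs from (II) by `ξ` times
`δ_{ij'} (X - Z) - δ_{a,-b} (Y - Z) + (-1)^{p(b)} δ_{ab} (Y - W)`, and each term of this vanishes
because the two monomials it compares coincide when its coefficient is nonzero. Comparing
coefficients only needs `q^{-e} = q^e - e ξ` for `e ∈ {-1, 0, 1}` and the trichotomy
`δ_{x<y} + δ_{y<x} + δ_{x=y} = 1`.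
-/

theorem Idx.neg {m : ℕ} {i : ℤ} (h : Idx m i) : Idx m (-i) :=
  ⟨neg_ne_zero.mpr h.1, by rw [abs_neg]; exact h.2⟩

theorem Idx.le {m : ℕ} {i : ℤ} (h : Idx m i) : i ≤ m :=
  (le_abs_self i).trans h.2

theorem p_of_pos {i : ℤ} (h : 0 < i) : p i = 0 := if_pos h

theorem p_of_neg {i : ℤ} (h : i < 0) : p i = 1 := if_neg (by omega)

theorem neg_one_pow_p_neg {b : ℤ} (hb : b ≠ 0) : (-1 : K) ^ p (-b) = -(-1) ^ p b := by
  unfold p; split_ifs <;> first | omega | norm_num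

theorem neg_one_pow_p_mul_self (b : ℤ) : (-1 : K) ^ p b * (-1) ^ p b = 1 := by
  rw [← mul_pow]; norm_num

theorem neg_one_pow_mul_p_neg (a : ℤ) {b : ℤ} (hb : b ≠ 0) :
    (-1 : K) ^ (p a * p (-b)) = (-1) ^ (p a * (1 + p b)) := by
  unfold p; split_ifs <;> first | omega | norm_num

theorem ind_pos {P : Prop} [Decidable P] (h : P) : ind P = 1 := if_pos h

theorem ind_lt_add_ind_lt_add_ind_eq (x y : ℤ) : ind (x < y) + ind (y < x) + ind (x = y) = 1 := by
  unfold ind; split_ifs <;> first | omega | norm_num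

theorem ind_smul_eq_zero {M : Type*} [AddCommGroup M] [Module K M] {P : Prop} [Decidable P]
    {x : M} (h : P → x = 0) : ind P • x = 0 := by
  unfold ind; split_ifs with hP <;> simp [*]

theorem q_zpow_φ_neg_of_pos {i j : ℤ} (hi : 0 < i) (hj : 0 < j) :
    q ^ φ i (-j) = q ^ (if i = j then 1 else 0 : ℕ) - ξ * ind (i = j) := by
  unfold φ ind ξ
  split_ifs <;> first | omega | simp

theorem q_zpow_φ_neg_right (a : ℤ) {b : ℤ} (hb : b ≠ 0) :
    q ^ φ a b = q ^ φ a (-b) - ξ * φ a (-b) := by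
  unfold φ ξ
  split_ifs <;> first | omega | simp

theorem neg_one_pow_mul_φ_neg_right (a : ℤ) {b : ℤ} (hb : b ≠ 0) :
    (-1 : K) ^ (p a * (1 + p b)) * φ a (-b) = ind (a = -b) - (-1) ^ p b * ind (a = b) := by
  unfold p φ ind
  split_ifs <;> first | omega | norm_num

section

-- `RatFunc` carries its own `ℕ`- and `ℤ`-algebra structures, not reducibly defeq to the
-- canonical ones that `match_scalars` compares scalars through.
attribute [local instance 10000] Semiring.toNatAlgebra Ring.toIntAlgebra

theorem relI_neg_of_relII {A : Type*} [Ring A] [Algebra K A] {t : ℤ → ℤ → A} {i j a b : ℤ}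
    (hi : 0 < i) (hj : 0 < j) (hb : b ≠ 0)
    (htb : t (-j) b = t j (-b)) (hta : t (-j) a = t j (-a)) (hta' : t (-j) (-a) = t j a)
    (h : RelII t i j a (-b)) : RelI t i (-j) a b := by
  have hXZ : ind (i = j) • (t i a * t j (-b) - t j a * t i (-b)) = 0 :=
    ind_smul_eq_zero fun h => by rw [h, sub_self]
  have hYZ : ind (a = -b) • (t j (-b) * t i a - t j a * t i (-b)) = 0 :=
    ind_smul_eq_zero fun h => by rw [h, sub_self]
  have hYW : ind (a = b) • (t j (-b) * t i a - t j (-a) * t i b) = 0 :=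
    ind_smul_eq_zero fun h => by rw [h, sub_self]
  unfold RelI RelII at *
  rw [htb, hta, hta', q_zpow_φ_neg_of_pos hi hj, q_zpow_φ_neg_right a hb]
  rw [neg_one_pow_mul_p_neg a hb, neg_one_pow_p_neg hb] at h
  simp only [p_of_pos hi, p_of_neg (neg_neg_of_pos hj), ind_pos (show -j < i by omega),
    neg_neg, neg_lt_neg_iff, neg_lt (a := a) (b := b), zero_mul, one_mul, mul_zero, add_zero,
    zero_add] at h ⊢
  linear_combination (norm := skip) (-1 : K) ^ p b • h - ((-1) ^ p b * ξ) • hXZ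
    + ((-1) ^ p b * ξ) • hYZ - ((-1) ^ p b * (-1) ^ p b * ξ) • hYW
  match_scalars
  · ring
  · linear_combination (-1 : K) ^ p b * ξ * neg_one_pow_mul_φ_neg_right a hb
  · linear_combination (-1 : K) ^ p b * ξ * (ind_lt_add_ind_lt_add_ind_eq a (-b)
      - ind_lt_add_ind_lt_add_ind_eq i j)
  · linear_combination -ξ * (ind (b < a) + ind (a = b)) * neg_one_pow_p_mul_self b
      - ξ * ind_lt_add_ind_lt_add_ind_eq a b

end

theorem relII_implies_relI_pos_neg_general (r n : ℕ)
    (A : Type*) [Ring A] [Algebra K A] (t : ℤ → ℤ → A)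
    (hsym : ∀ i a, Idx r i → Idx n a → t (-i) (-a) = t i a)
    (hII : ∀ i j a b, 1 ≤ i → i ≤ (r : ℤ) → 1 ≤ j → j ≤ (r : ℤ) →
      Idx n a → Idx n b → RelII t i j a b) :
    ∀ i j a b, Idx r i → Idx r j → j < 0 → 0 < i →
      Idx n a → Idx n b → RelI t i j a b := by
  intro i j a b hi hj hj_neg hi_pos ha hb
  obtain ⟨j, rfl⟩ : ∃ j', j = -j' := ⟨-j, (neg_neg j).symm⟩
  have hj' : Idx r j := by simpa using hj.neg
  have hj_pos : 0 < j := by omega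
  refine relI_neg_of_relII hi_pos hj_pos hb.1 ?_ ?_ (hsym j a hj' ha) ?_
  · simpa using hsym j (-b) hj' hb.neg
  · simpa using hsym j (-a) hj' ha.neg
  · exact hII i j a (-b) hi_pos hi.le hj_pos hj'.le ha hb.neg

/-- (Case `j < 0 < i`.) Assume `t_{−i,−a} = t_{ia}` for all
`i ∈ I_{r|r}`, `a ∈ I_{n|n}`, and assume relation (II) holds for all
`1 ≤ i, j ≤ r` and `a, b ∈ I_{n|n}`. Then relation (I) holds for all
`i, j ∈ I_{r|r}` with `j < 0 < i` and all `a, b ∈ I_{n|n}`. -/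
theorem relII_implies_relI_pos_neg (r n : ℕ) (hr : 0 < r) (hn : 0 < n)
    (A : Type*) [Ring A] [Algebra K A] (t : ℤ → ℤ → A)
    (hsym : ∀ i a, Idx r i → Idx n a → t (-i) (-a) = t i a)
    (hII : ∀ i j a b, 1 ≤ i → i ≤ (r : ℤ) → 1 ≤ j → j ≤ (r : ℤ) →
      Idx n a → Idx n b → RelII t i j a b) :
    ∀ i j a b, Idx r i → Idx r j → j < 0 → 0 < i →
      Idx n a → Idx n b → RelI t i j a b :=
  relII_implies_relI_pos_neg_general r n A t hsym hII
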